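/- arXiv:1810.08114 — 4 statements merged into one kernel-verified Lean document; each statement's English description precedes it below -/
import Mathlib

section
/- Let n ≥ 1, let μ be a nonzero finite Borel measure on ℝ^{n+1} with compact support, and fix t₀ > 0. Then the function x₀ ↦ F_{x₀,t₀}(μ) attains its supremum over ℝ^{n+1}, and every point x̃₀ ∈ ℝ^{n+1} at which this supremum is attained lies in the closed convex hull of the support of μ. -/
open MeasureTheory Metric Set

/-- The F-functional `F_{x₀,t₀}(μ) = (4π t₀)^{-n/2} ∫ exp(-‖x-x₀‖²/(4t₀)) dμ(x)`. -/
noncomputable def Ffn (n : ℕ) (μ : Measure (EuclideanSpace ℝ (Fin (n + 1))))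
    (x₀ : EuclideanSpace ℝ (Fin (n + 1))) (t₀ : ℝ) : ℝ :=
  (4 * Real.pi * t₀) ^ (-(n : ℝ) / 2) *
    ∫ x, Real.exp (-‖x - x₀‖ ^ 2 / (4 * t₀)) ∂μ

/-- The support of a measure on a metric space: points all of whose neighbourhoods have
positive measure. -/
def measureSupport {n : ℕ} (μ : Measure (EuclideanSpace ℝ (Fin (n + 1)))) :
    Set (EuclideanSpace ℝ (Fin (n + 1))) :=
  {x | ∀ r : ℝ, 0 < r → 0 < μ (ball x r)}

/-!
Let `C` be a closed convex set carrying all of `μ`, and `x₀ ∉ C`. If `p` is the nearest point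
of `C` to `x₀`, then `‖y - p‖² + ‖x₀ - p‖² ≤ ‖y - x₀‖²` for every `y ∈ C` (the angle at `p` is
obtuse), so moving the centre of the Gaussian from `x₀` to `p` multiplies the integrand
pointwise on `C` by at least `exp (‖x₀ - p‖² / 4t₀) > 1` and strictly increases `F`. Hence
maximisers lie in `C`, in particular in the closed convex hull of the support. Taking for `C`
the closed convex hull of a bounded carrier of `μ`, which is compact, the maximum of `F` over
`C` is a global maximum.
-/

theorem Set.Nonempty.of_measure_compl_eq_zero {α : Type*} [MeasurableSpace α] {μ : Measure α}
    (hμ : μ ≠ 0) {S : Set α} (hS : μ Sᶜ = 0) : S.Nonempty :=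
  have : (ae μ).NeBot := ae_neBot.2 hμ
  Filter.Eventually.exists (mem_ae_iff.2 hS)

theorem exists_sq_norm_sub_add_le_of_notMem {E : Type*} [NormedAddCommGroup E]
    [InnerProductSpace ℝ E] [CompleteSpace E] {C : Set E} (hne : C.Nonempty)
    (hC : IsClosed C) (hconv : Convex ℝ C) {x : E} (hx : x ∉ C) :
    ∃ p ∈ C, p ≠ x ∧ ∀ y ∈ C, ‖y - p‖ ^ 2 + ‖x - p‖ ^ 2 ≤ ‖y - x‖ ^ 2 := by
  obtain ⟨p, hpC, hp⟩ := exists_norm_eq_iInf_of_complete_convex hne hC.isComplete hconv x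
  have hobtuse := (norm_eq_iInf_iff_real_inner_le_zero hconv hpC).1 hp
  refine ⟨p, hpC, fun h => hx (h ▸ hpC), fun y hy => ?_⟩
  have hsplit : y - x = (y - p) - (x - p) := by abel
  rw [hsplit, norm_sub_sq_real (y - p) (x - p), real_inner_comm]
  linarith [hobtuse y hy]

variable {E : Type*} [NormedAddCommGroup E]

theorem exp_neg_sq_norm_sub_div_le_one {t : ℝ} (ht : 0 ≤ t) (x x₀ : E) :
    Real.exp (-‖x - x₀‖ ^ 2 / (4 * t)) ≤ 1 :=
  Real.exp_le_one_iff.2 (div_nonpos_of_nonpos_of_nonneg (by nlinarith [norm_nonneg (x - x₀)])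
    (by positivity))

noncomputable def gaussianIntegral [MeasurableSpace E] (μ : Measure E) (t : ℝ) (x₀ : E) : ℝ :=
  ∫ x, Real.exp (-‖x - x₀‖ ^ 2 / (4 * t)) ∂μ

section GaussianIntegral

variable [MeasurableSpace E] [BorelSpace E] (μ : Measure E) [IsFiniteMeasure μ] {t : ℝ}

theorem integrable_exp_neg_sq_norm_sub_div (ht : 0 ≤ t) (x₀ : E) :
    Integrable (fun x => Real.exp (-‖x - x₀‖ ^ 2 / (4 * t))) μ :=
  (integrable_const (1 : ℝ)).mono' (Continuous.aestronglyMeasurable (by fun_prop))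
    (.of_forall fun x => by
      simpa [abs_of_pos (Real.exp_pos _)] using exp_neg_sq_norm_sub_div_le_one ht x x₀)

theorem continuous_gaussianIntegral (ht : 0 ≤ t) : Continuous (gaussianIntegral μ t) :=
  continuous_of_dominated (fun x₀ => (by fun_prop : Continuous _).aestronglyMeasurable)
    (fun x₀ => .of_forall fun x => by
      simpa [abs_of_pos (Real.exp_pos _)] using exp_neg_sq_norm_sub_div_le_one ht x x₀)
    (integrable_const 1) (.of_forall fun x => by fun_prop)

theorem gaussianIntegral_pos (hμ : μ ≠ 0) (ht : 0 ≤ t) (x₀ : E) :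
    0 < gaussianIntegral μ t x₀ := by
  rw [gaussianIntegral, integral_pos_iff_support_of_nonneg
    (fun x => (Real.exp_pos _).le) (integrable_exp_neg_sq_norm_sub_div μ ht x₀)]
  simpa [Function.support, (Real.exp_pos _).ne'] using Measure.measure_univ_pos.2 hμ

theorem gaussianIntegral_lt_of_ae_sq_norm_sub_add_le (hμ : μ ≠ 0) (ht : 0 < t) {x p : E}
    {δ : ℝ} (hδ : 0 < δ) (h : ∀ᵐ y ∂μ, ‖y - p‖ ^ 2 + δ ≤ ‖y - x‖ ^ 2) :
    gaussianIntegral μ t x < gaussianIntegral μ t p := by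
  have hgain : 1 < Real.exp (δ / (4 * t)) := Real.one_lt_exp_iff.2 (by positivity)
  calc gaussianIntegral μ t x
      < Real.exp (δ / (4 * t)) * gaussianIntegral μ t x :=
        lt_mul_of_one_lt_left (gaussianIntegral_pos μ hμ ht.le x) hgain
    _ = ∫ y, Real.exp (δ / (4 * t)) * Real.exp (-‖y - x‖ ^ 2 / (4 * t)) ∂μ :=
        (integral_const_mul _ _).symm
    _ ≤ gaussianIntegral μ t p := by
        refine integral_mono_ae ((integrable_exp_neg_sq_norm_sub_div μ ht.le x).const_mul _)
          (integrable_exp_neg_sq_norm_sub_div μ ht.le p) ?_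
        filter_upwards [h] with y hy
        rw [← Real.exp_add, Real.exp_le_exp, ← add_div]
        gcongr
        linarith

variable [InnerProductSpace ℝ E] [CompleteSpace E]

theorem exists_gaussianIntegral_lt_of_notMem (hμ : μ ≠ 0) (ht : 0 < t) {S : Set E}
    (hS : μ Sᶜ = 0) {x : E} (hx : x ∉ closure (convexHull ℝ S)) :
    ∃ p ∈ closure (convexHull ℝ S), gaussianIntegral μ t x < gaussianIntegral μ t p := by
  obtain ⟨p, hpC, hpx, hp⟩ := exists_sq_norm_sub_add_le_of_notMem
    (((Set.Nonempty.of_measure_compl_eq_zero hμ hS).mono (subset_convexHull ℝ S)).closure)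
    isClosed_closure (convex_convexHull ℝ S).closure hx
  refine ⟨p, hpC, gaussianIntegral_lt_of_ae_sq_norm_sub_add_le μ hμ ht
    (pow_pos (norm_pos_iff.2 (sub_ne_zero.2 hpx.symm)) 2) ?_⟩
  filter_upwards [mem_ae_iff.2 hS] with y hy
  exact hp y (subset_closure (subset_convexHull ℝ S hy))

theorem mem_closure_convexHull_of_forall_gaussianIntegral_le (hμ : μ ≠ 0) (ht : 0 < t)
    {S : Set E} (hS : μ Sᶜ = 0) {x₀ : E}
    (hmax : ∀ x, gaussianIntegral μ t x ≤ gaussianIntegral μ t x₀) :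
    x₀ ∈ closure (convexHull ℝ S) := by
  by_contra hx₀
  obtain ⟨p, -, hp⟩ := exists_gaussianIntegral_lt_of_notMem μ hμ ht hS hx₀
  exact lt_irrefl _ (hp.trans_le (hmax p))

theorem exists_forall_gaussianIntegral_le [ProperSpace E] (hμ : μ ≠ 0) (ht : 0 < t)
    {K : Set E} (hK : Bornology.IsBounded K) (hK0 : μ Kᶜ = 0) :
    ∃ x₀, ∀ x, gaussianIntegral μ t x ≤ gaussianIntegral μ t x₀ := by
  set C := closure (convexHull ℝ K)
  have hCcpt : IsCompact C :=
    isCompact_of_isClosed_isBounded isClosed_closure (isBounded_convexHull.2 hK).closure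
  have hCne : C.Nonempty :=
    ((Set.Nonempty.of_measure_compl_eq_zero hμ hK0).mono (subset_convexHull ℝ K)).closure
  obtain ⟨x₀, -, hx₀⟩ :=
    hCcpt.exists_isMaxOn hCne (continuous_gaussianIntegral μ ht.le).continuousOn
  refine ⟨x₀, fun x => ?_⟩
  by_cases hx : x ∈ C
  · exact hx₀ hx
  · obtain ⟨p, hpC, hp⟩ := exists_gaussianIntegral_lt_of_notMem μ hμ ht hK0 hx
    exact hp.le.trans (hx₀ hpC)

end GaussianIntegral

section Euclidean

variable {n : ℕ} (μ : Measure (EuclideanSpace ℝ (Fin (n + 1))))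

theorem measureSupport_eq_support : measureSupport μ = μ.support :=
  Set.ext fun _ => nhds_basis_ball.mem_measureSupport.symm

theorem Ffn_le_Ffn_iff {t : ℝ} (ht : 0 < t) (x y : EuclideanSpace ℝ (Fin (n + 1))) :
    Ffn n μ x t ≤ Ffn n μ y t ↔ gaussianIntegral μ t x ≤ gaussianIntegral μ t y :=
  mul_le_mul_iff_right₀ (Real.rpow_pos_of_pos (by positivity) _)

end Euclidean

theorem stmt_0_general (n : ℕ) (μ : Measure (EuclideanSpace ℝ (Fin (n + 1))))
    [IsFiniteMeasure μ] (hμ : μ ≠ 0)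
    (hcpt : ∃ K : Set (EuclideanSpace ℝ (Fin (n + 1))), IsCompact K ∧ μ Kᶜ = 0)
    (t₀ : ℝ) (ht₀ : 0 < t₀) :
    (∃ x₀ : EuclideanSpace ℝ (Fin (n + 1)), ∀ x : EuclideanSpace ℝ (Fin (n + 1)),
        Ffn n μ x t₀ ≤ Ffn n μ x₀ t₀) ∧
      ∀ x₀ : EuclideanSpace ℝ (Fin (n + 1)),
        (∀ x : EuclideanSpace ℝ (Fin (n + 1)), Ffn n μ x t₀ ≤ Ffn n μ x₀ t₀) →
          x₀ ∈ closure (convexHull ℝ (measureSupport μ)) := by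
  obtain ⟨K, hK, hK0⟩ := hcpt
  simp only [Ffn_le_Ffn_iff μ ht₀, measureSupport_eq_support]
  exact ⟨exists_forall_gaussianIntegral_le μ hμ ht₀ hK.isBounded hK0,
    fun _ hmax => mem_closure_convexHull_of_forall_gaussianIntegral_le μ hμ ht₀
      Measure.measure_compl_support hmax⟩

theorem stmt_0 (n : ℕ) (hn : 1 ≤ n) (μ : Measure (EuclideanSpace ℝ (Fin (n + 1))))
    [IsFiniteMeasure μ] (hμ : μ ≠ 0)
    (hcpt : ∃ K : Set (EuclideanSpace ℝ (Fin (n + 1))), IsCompact K ∧ μ Kᶜ = 0)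
    (t₀ : ℝ) (ht₀ : 0 < t₀) :
    (∃ x₀ : EuclideanSpace ℝ (Fin (n + 1)), ∀ x : EuclideanSpace ℝ (Fin (n + 1)),
        Ffn n μ x t₀ ≤ Ffn n μ x₀ t₀) ∧
      ∀ x₀ : EuclideanSpace ℝ (Fin (n + 1)),
        (∀ x : EuclideanSpace ℝ (Fin (n + 1)), Ffn n μ x t₀ ≤ Ffn n μ x₀ t₀) →
          x₀ ∈ closure (convexHull ℝ (measureSupport μ)) :=
  stmt_0_general n μ hμ hcpt t₀ ht₀
end

section
/- Let n ≥ 1, let μ be a finite Borel measure on ℝ^{n+1} with compact support, and fix x₀, y ∈ ℝ^{n+1}, t₀ > 0 and h ∈ ℝ. Set x_s = x₀ + s·y and t_s = t₀ + s·h. Then the function s ↦ F_{x_s,t_s}(μ) is differentiable at s = 0, with derivative (4π t₀)^{-n/2} ∫_{ℝ^{n+1}} [ h·(‖x − x₀‖²/(4 t₀²) − n/(2 t₀)) + ⟨x − x₀, y⟩/(2 t₀) ] · exp(−‖x − x₀‖²/(4 t₀)) dμ(x). -/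
open MeasureTheory

/-!
On the compact support of `μ` the Gaussian weight and its derivative along the line
`s ↦ (x₀ + s • y, t₀ + s * h)` are bounded uniformly for `s` near `0` (where `t₀ + s * h` stays
away from `0`), so the derivative may be taken under the integral sign. The product rule with
the derivative `-(n h / (2 t₀)) (4π t₀)^{-n/2}` of the prefactor then produces the term
`-h n / (2 t₀)` of the integrand.
-/

open Metric Set Filter

section IntegralOverCompact

variable {X : Type*} [TopologicalSpace X] [MeasurableSpace X] [OpensMeasurableSpace X]
  {μ : Measure X} [IsFiniteMeasure μ] {K : Set X}

theorem Continuous.integrable_of_ae_mem_isCompact {f : X → ℝ} (hf : Continuous f)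
    (hK : IsCompact K) (hμK : ∀ᵐ x ∂μ, x ∈ K) : Integrable f μ := by
  obtain ⟨C, hC⟩ := hK.exists_bound_of_continuousOn hf.continuousOn
  exact Integrable.of_bound hf.aestronglyMeasurable C (hμK.mono hC)

theorem hasDerivAt_integral_of_ae_mem_isCompact (hK : IsCompact K) (hμK : ∀ᵐ x ∂μ, x ∈ K)
    {F F' : ℝ → X → ℝ} {s₀ ε : ℝ} (hε : 0 < ε)
    (hF : ∀ s ∈ ball s₀ ε, Continuous (F s))
    (hF' : ContinuousOn (Function.uncurry F') (closedBall s₀ ε ×ˢ univ))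
    (hdiff : ∀ s ∈ ball s₀ ε, ∀ x, HasDerivAt (F · x) (F' s x) s) :
    Integrable (F' s₀) μ ∧ HasDerivAt (fun s => ∫ x, F s x ∂μ) (∫ x, F' s₀ x ∂μ) s₀ := by
  obtain ⟨C, hC⟩ := ((isCompact_closedBall s₀ ε).prod hK).exists_bound_of_continuousOn
    (hF'.mono (prod_mono subset_rfl (subset_univ K)))
  have hF's₀ : Continuous (F' s₀) := hF'.comp_continuous
    (continuous_const.prodMk continuous_id) fun x => ⟨mem_closedBall_self hε.le, mem_univ x⟩
  exact (hasDerivAt_integral_of_dominated_loc_of_deriv_le (ball_mem_nhds s₀ hε)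
    (eventually_of_mem (ball_mem_nhds s₀ hε) fun s hs => (hF s hs).aestronglyMeasurable)
    ((hF s₀ (mem_ball_self hε)).integrable_of_ae_mem_isCompact hK hμK)
    hF's₀.aestronglyMeasurable
    (hμK.mono fun x hx s hs => hC (s, x) ⟨ball_subset_closedBall hs, hx⟩)
    (integrable_const C) (ae_of_all _ fun x s hs => hdiff s hs x))

end IntegralOverCompact

section GaussWeight

variable {E : Type*} [NormedAddCommGroup E]

noncomputable def gaussWeight (x₀ : E) (t : ℝ) (x : E) : ℝ :=
  Real.exp (-‖x - x₀‖ ^ 2 / (4 * t))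

theorem continuous_gaussWeight (x₀ : E) (t : ℝ) : Continuous (gaussWeight x₀ t) := by
  unfold gaussWeight
  fun_prop

variable [InnerProductSpace ℝ E]

/-- The derivative of `(x₀, t) ↦ gaussWeight x₀ t x` in the direction `(y, h)`. -/
noncomputable def gaussWeightDeriv (x₀ : E) (t : ℝ) (y : E) (h : ℝ) (x : E) : ℝ :=
  (h * (‖x - x₀‖ ^ 2 / (4 * t ^ 2)) + inner ℝ (x - x₀) y / (2 * t)) * gaussWeight x₀ t x

theorem continuousOn_gaussWeightDeriv_line (x₀ y : E) (t₀ h : ℝ) :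
    ContinuousOn (fun p : ℝ × E => gaussWeightDeriv (x₀ + p.1 • y) (t₀ + p.1 * h) y h p.2)
      {p | t₀ + p.1 * h ≠ 0} := by
  unfold gaussWeightDeriv gaussWeight
  fun_prop (disch := first | assumption | simp_all)

theorem hasDerivAt_gaussWeight_line (x x₀ y : E) (t₀ h : ℝ) {s : ℝ} (ht : t₀ + s * h ≠ 0) :
    HasDerivAt (fun u : ℝ => gaussWeight (x₀ + u • y) (t₀ + u * h) x)
      (gaussWeightDeriv (x₀ + s • y) (t₀ + s * h) y h x) s := by
  have hdisp : HasDerivAt (fun u : ℝ => x - (x₀ + u • y)) (-y) s := by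
    simpa using (((hasDerivAt_id s).smul_const y).const_add x₀).const_sub x
  have hnorm : HasDerivAt (fun u : ℝ => ‖x - (x₀ + u • y)‖ ^ 2)
      (-(2 * inner ℝ (x - (x₀ + s • y)) y)) s := by
    refine (hdisp.inner ℝ hdisp).congr_deriv ?_ |>.congr_of_eventuallyEq
      (Eventually.of_forall fun u => (real_inner_self_eq_norm_sq _).symm)
    rw [inner_neg_right, inner_neg_left, real_inner_comm]
    ring
  have ht' : HasDerivAt (fun u : ℝ => 4 * (t₀ + u * h)) (4 * h) s := by
    simpa using (((hasDerivAt_id s).mul_const h).const_add t₀).const_mul 4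
  refine (hnorm.neg.div ht' (by simpa using ht)).exp.congr_deriv ?_
  unfold gaussWeightDeriv gaussWeight
  simp only [Pi.div_apply, Pi.neg_apply]
  field_simp
  ring

end GaussWeight

theorem hasDerivAt_mul_add_mul_rpow {c t₀ : ℝ} (hc : 0 < c) (ht₀ : 0 < t₀) (h p : ℝ) :
    HasDerivAt (fun s : ℝ => (c * (t₀ + s * h)) ^ p) (p * h / t₀ * (c * t₀) ^ p) 0 := by
  have hlin : HasDerivAt (fun s : ℝ => c * (t₀ + s * h)) (c * h) 0 := by
    simpa using (((hasDerivAt_id (0 : ℝ)).mul_const h).const_add t₀).const_mul c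
  have hbase : c * (t₀ + 0 * h) ≠ 0 := by rw [zero_mul, add_zero]; positivity
  refine (hlin.rpow_const (p := p) (Or.inl hbase)).congr_deriv ?_
  rw [zero_mul, add_zero, Real.rpow_sub_one (by positivity)]
  field_simp

theorem stmt_1_general (n : ℕ) (μ : Measure (EuclideanSpace ℝ (Fin (n + 1))))
    [IsFiniteMeasure μ]
    (hcpt : ∃ K : Set (EuclideanSpace ℝ (Fin (n + 1))), IsCompact K ∧ μ Kᶜ = 0)
    (x₀ y : EuclideanSpace ℝ (Fin (n + 1))) (t₀ : ℝ) (ht₀ : 0 < t₀) (h : ℝ) :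
    HasDerivAt (fun s : ℝ => Ffn n μ (x₀ + s • y) (t₀ + s * h))
      ((4 * Real.pi * t₀) ^ (-(n : ℝ) / 2) *
        ∫ x, (h * (‖x - x₀‖ ^ 2 / (4 * t₀ ^ 2) - n / (2 * t₀)) +
            (inner ℝ (x - x₀) y : ℝ) / (2 * t₀)) *
          Real.exp (-‖x - x₀‖ ^ 2 / (4 * t₀)) ∂μ)
      0 := by
  obtain ⟨K, hK, hKc⟩ := hcpt
  have hμK : ∀ᵐ x ∂μ, x ∈ K := by simpa using measure_eq_zero_iff_ae_notMem.mp hKc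
  obtain ⟨ε, hε, hεt⟩ : ∃ ε > 0, closedBall (0 : ℝ) ε ⊆ {s | t₀ + s * h ≠ 0} :=
    nhds_basis_closedBall.mem_iff.mp <| (isOpen_ne_fun (by fun_prop) continuous_const).mem_nhds
      (by simpa using ht₀.ne')
  have hI := hasDerivAt_integral_of_ae_mem_isCompact hK hμK hε
    (F := fun s => gaussWeight (x₀ + s • y) (t₀ + s * h))
    (F' := fun s => gaussWeightDeriv (x₀ + s • y) (t₀ + s * h) y h)
    (fun s _ => continuous_gaussWeight _ _)
    ((continuousOn_gaussWeightDeriv_line x₀ y t₀ h).mono fun _ hp => hεt (mem_prod.mp hp).1)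
    (fun s hs x => hasDerivAt_gaussWeight_line x x₀ y t₀ h (hεt (ball_subset_closedBall hs)))
  have hP := hasDerivAt_mul_add_mul_rpow (by positivity : 0 < 4 * Real.pi) ht₀ h (-(n : ℝ) / 2)
  refine (hP.mul hI.2).congr_deriv ?_
  have hw := (continuous_gaussWeight x₀ t₀).integrable_of_ae_mem_isCompact hK hμK
  simp only [zero_smul, add_zero, zero_mul] at hI ⊢
  conv_rhs => rw [integral_congr_ae (g := fun x =>
    gaussWeightDeriv x₀ t₀ y h x - n * h / (2 * t₀) * gaussWeight x₀ t₀ x)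
    (ae_of_all μ fun x => by simp only [gaussWeightDeriv, gaussWeight]; ring)]
  rw [integral_sub hI.1 (hw.const_mul _), integral_const_mul]
  field_simp
  ring

theorem stmt_1 (n : ℕ) (hn : 1 ≤ n) (μ : Measure (EuclideanSpace ℝ (Fin (n + 1))))
    [IsFiniteMeasure μ]
    (hcpt : ∃ K : Set (EuclideanSpace ℝ (Fin (n + 1))), IsCompact K ∧ μ Kᶜ = 0)
    (x₀ y : EuclideanSpace ℝ (Fin (n + 1))) (t₀ : ℝ) (ht₀ : 0 < t₀) (h : ℝ) :
    HasDerivAt (fun s : ℝ => Ffn n μ (x₀ + s • y) (t₀ + s * h))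
      ((4 * Real.pi * t₀) ^ (-(n : ℝ) / 2) *
        ∫ x, (h * (‖x - x₀‖ ^ 2 / (4 * t₀ ^ 2) - n / (2 * t₀)) +
            (inner ℝ (x - x₀) y : ℝ) / (2 * t₀)) *
          Real.exp (-‖x - x₀‖ ^ 2 / (4 * t₀)) ∂μ)
      0 :=
  stmt_1_general n μ hcpt x₀ y t₀ ht₀ h
end

section
/- Let n ≥ 1 and let μ_i (i ∈ ℕ) and μ be Radon measures on ℝ^{n+1} with uniformly bounded entropy, i.e. there is Λ < ∞ with λ(μ_i) ≤ Λ for all i and λ(μ) ≤ Λ. If μ_i converges weakly to μ, then for every x₀ ∈ ℝ^{n+1} and t₀ > 0, F_{x₀,t₀}(μ_i) → F_{x₀,t₀}(μ) as i → ∞. -/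
open MeasureTheory Set ENNReal Filter

/-- The F-functional, valued in `[0,∞]`. -/
noncomputable def Fe (n : ℕ) (μ : Measure (EuclideanSpace ℝ (Fin (n + 1))))
    (x₀ : EuclideanSpace ℝ (Fin (n + 1))) (t₀ : ℝ) : ℝ≥0∞ :=
  ENNReal.ofReal ((4 * Real.pi * t₀) ^ (-(n : ℝ) / 2)) *
    ∫⁻ x, ENNReal.ofReal (Real.exp (-‖x - x₀‖ ^ 2 / (4 * t₀))) ∂μ

/-- The entropy `λ(μ) = sup {F_{x₀,t₀}(μ) : x₀ ∈ ℝ^{n+1}, t₀ > 0}`, valued in `[0,∞]`. -/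
noncomputable def entropyE (n : ℕ) (μ : Measure (EuclideanSpace ℝ (Fin (n + 1)))) : ℝ≥0∞ :=
  ⨆ (x₀ : EuclideanSpace ℝ (Fin (n + 1))) (t₀ : ℝ) (_ : 0 < t₀), Fe n μ x₀ t₀

lemma aux_lint (n : ℕ) (ν : Measure (EuclideanSpace ℝ (Fin (n + 1)))) (Λ : ℝ)
    (hν : entropyE n ν ≤ ENNReal.ofReal Λ)
    (x₀ : EuclideanSpace ℝ (Fin (n + 1))) (t : ℝ) (ht : 0 < t) :
    ∫⁻ x, ENNReal.ofReal (Real.exp (-‖x - x₀‖ ^ 2 / (4 * t))) ∂ν ≤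
      ENNReal.ofReal (max Λ 0 / (4 * Real.pi * t) ^ (-(n : ℝ) / 2)) := by
  have hc : (0:ℝ) < (4 * Real.pi * t) ^ (-(n : ℝ) / 2) :=
    Real.rpow_pos_of_pos (by positivity) _
  have hFe : Fe n ν x₀ t ≤ ENNReal.ofReal Λ := by
    refine le_trans ?_ hν
    exact le_iSup_of_le x₀ (le_iSup_of_le t (le_iSup_of_le ht le_rfl))
  rw [Fe] at hFe
  have h1 : ∫⁻ x, ENNReal.ofReal (Real.exp (-‖x - x₀‖ ^ 2 / (4 * t))) ∂ν ≤
      ENNReal.ofReal Λ / ENNReal.ofReal ((4 * Real.pi * t) ^ (-(n : ℝ) / 2)) := by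
    rw [ENNReal.le_div_iff_mul_le (Or.inl (by simp [hc])) (Or.inl ENNReal.ofReal_ne_top)]
    rwa [mul_comm] at hFe
  refine h1.trans ?_
  rw [ENNReal.ofReal_div_of_pos hc]
  exact ENNReal.div_le_div_right (ENNReal.ofReal_le_ofReal (le_max_left _ _)) _

lemma aux_integrable (n : ℕ) (ν : Measure (EuclideanSpace ℝ (Fin (n + 1)))) (Λ : ℝ)
    (hν : entropyE n ν ≤ ENNReal.ofReal Λ)
    (x₀ : EuclideanSpace ℝ (Fin (n + 1))) (t : ℝ) (ht : 0 < t) :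
    Integrable (fun x => Real.exp (-‖x - x₀‖ ^ 2 / (4 * t))) ν := by
  have hcont : Continuous (fun x : EuclideanSpace ℝ (Fin (n + 1)) =>
      Real.exp (-‖x - x₀‖ ^ 2 / (4 * t))) := by fun_prop
  refine ⟨hcont.aestronglyMeasurable, ?_⟩
  rw [hasFiniteIntegral_iff_ofReal (ae_of_all _ fun x => (Real.exp_pos _).le)]
  exact lt_of_le_of_lt (aux_lint n ν Λ hν x₀ t ht) ENNReal.ofReal_lt_top

lemma aux_int_le (n : ℕ) (ν : Measure (EuclideanSpace ℝ (Fin (n + 1)))) (Λ : ℝ)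
    (hν : entropyE n ν ≤ ENNReal.ofReal Λ)
    (x₀ : EuclideanSpace ℝ (Fin (n + 1))) (t : ℝ) (ht : 0 < t) :
    ∫ x, Real.exp (-‖x - x₀‖ ^ 2 / (4 * t)) ∂ν ≤
      max Λ 0 / (4 * Real.pi * t) ^ (-(n : ℝ) / 2) := by
  have hcont : Continuous (fun x : EuclideanSpace ℝ (Fin (n + 1)) =>
      Real.exp (-‖x - x₀‖ ^ 2 / (4 * t))) := by fun_prop
  rw [integral_eq_lintegral_of_nonneg_ae (ae_of_all _ fun x => (Real.exp_pos _).le)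
    hcont.aestronglyMeasurable]
  have hc : (0:ℝ) < (4 * Real.pi * t) ^ (-(n : ℝ) / 2) :=
    Real.rpow_pos_of_pos (by positivity) _
  have hM : (0:ℝ) ≤ max Λ 0 / (4 * Real.pi * t) ^ (-(n : ℝ) / 2) := by positivity
  calc (∫⁻ x, ENNReal.ofReal (Real.exp (-‖x - x₀‖ ^ 2 / (4 * t))) ∂ν).toReal
      ≤ (ENNReal.ofReal (max Λ 0 / (4 * Real.pi * t) ^ (-(n : ℝ) / 2))).toReal :=
        ENNReal.toReal_mono ENNReal.ofReal_ne_top (aux_lint n ν Λ hν x₀ t ht)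
    _ = _ := ENNReal.toReal_ofReal hM

lemma sc_split (a t : ℝ) (ht : 0 < t) :
    Real.exp (-a / (4 * t)) =
      Real.exp (-a / (4 * (2 * t))) * Real.exp (-a / (4 * (2 * t))) := by
  rw [← Real.exp_add]; congr 1; field_simp; ring

lemma sc_mono (a R t : ℝ) (ht : 0 < t) (h : R ^ 2 ≤ a) :
    Real.exp (-a / (4 * (2 * t))) ≤ Real.exp (-R ^ 2 / (4 * (2 * t))) := by
  apply Real.exp_le_exp.mpr
  have h3 : (0:ℝ) < 4 * (2 * t) := by linarith
  rw [div_le_div_iff₀ h3 h3]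
  nlinarith

lemma aux_tail (n : ℕ) (ν : Measure (EuclideanSpace ℝ (Fin (n + 1))))
    [IsLocallyFiniteMeasure ν] (Λ : ℝ)
    (hν : entropyE n ν ≤ ENNReal.ofReal Λ)
    (x₀ : EuclideanSpace ℝ (Fin (n + 1))) (t₀ : ℝ) (ht₀ : 0 < t₀) (R : ℝ) (hR : 0 < R) :
    |(∫ x, Real.exp (-‖x - x₀‖ ^ 2 / (4 * t₀)) ∂ν) -
      ∫ x, (max 0 (min 1 (2 - ‖x - x₀‖ / R))) * Real.exp (-‖x - x₀‖ ^ 2 / (4 * t₀)) ∂ν| ≤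
      Real.exp (-R ^ 2 / (4 * (2 * t₀))) *
        (max Λ 0 / (4 * Real.pi * (2 * t₀)) ^ (-(n : ℝ) / 2)) := by
  have hφ01 : ∀ x : EuclideanSpace ℝ (Fin (n + 1)),
      0 ≤ max 0 (min 1 (2 - ‖x - x₀‖ / R)) ∧ max 0 (min 1 (2 - ‖x - x₀‖ / R)) ≤ 1 := fun x =>
    ⟨le_max_left _ _, max_le (by norm_num) (min_le_left _ _)⟩
  have hφ1 : ∀ x : EuclideanSpace ℝ (Fin (n + 1)), ‖x - x₀‖ ≤ R →
      max 0 (min 1 (2 - ‖x - x₀‖ / R)) = 1 := by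
    intro x hx
    have h1 : (1:ℝ) ≤ 2 - ‖x - x₀‖ / R := by
      have : ‖x - x₀‖ / R ≤ 1 := (div_le_one hR).mpr hx
      linarith
    rw [min_eq_left h1]
    norm_num
  -- pointwise tail bound
  have hpt : ∀ x : EuclideanSpace ℝ (Fin (n + 1)),
      Real.exp (-‖x - x₀‖ ^ 2 / (4 * t₀)) -
        (max 0 (min 1 (2 - ‖x - x₀‖ / R))) * Real.exp (-‖x - x₀‖ ^ 2 / (4 * t₀)) ≤
      Real.exp (-R ^ 2 / (4 * (2 * t₀))) * Real.exp (-‖x - x₀‖ ^ 2 / (4 * (2 * t₀))) := by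
    intro x
    rcases le_or_gt ‖x - x₀‖ R with hle | hgt
    · rw [hφ1 x hle, one_mul, sub_self]
      positivity
    · have h1 : Real.exp (-‖x - x₀‖ ^ 2 / (4 * t₀)) -
          (max 0 (min 1 (2 - ‖x - x₀‖ / R))) * Real.exp (-‖x - x₀‖ ^ 2 / (4 * t₀)) ≤
          Real.exp (-‖x - x₀‖ ^ 2 / (4 * t₀)) := by
        have := mul_nonneg (hφ01 x).1 (Real.exp_pos (-‖x - x₀‖ ^ 2 / (4 * t₀))).le
        linarith
      refine h1.trans ?_
      rw [sc_split (‖x - x₀‖ ^ 2) t₀ ht₀]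
      have h2 : R ^ 2 ≤ ‖x - x₀‖ ^ 2 := by nlinarith [norm_nonneg (x - x₀)]
      exact mul_le_mul_of_nonneg_right (sc_mono _ R t₀ ht₀ h2) (Real.exp_pos _).le
  have hpt0 : ∀ x : EuclideanSpace ℝ (Fin (n + 1)),
      0 ≤ Real.exp (-‖x - x₀‖ ^ 2 / (4 * t₀)) -
        (max 0 (min 1 (2 - ‖x - x₀‖ / R))) * Real.exp (-‖x - x₀‖ ^ 2 / (4 * t₀)) := by
    intro x
    have h1 := (hφ01 x).2
    have h2 := (hφ01 x).1
    nlinarith [(Real.exp_pos (-‖x - x₀‖ ^ 2 / (4 * t₀))).le]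
  -- integrability
  have hfi : Integrable (fun x => Real.exp (-‖x - x₀‖ ^ 2 / (4 * t₀))) ν :=
    aux_integrable n ν Λ hν x₀ t₀ ht₀
  have hgi : Integrable (fun x => Real.exp (-‖x - x₀‖ ^ 2 / (4 * (2 * t₀)))) ν :=
    aux_integrable n ν Λ hν x₀ (2 * t₀) (by linarith)
  have hφcont : Continuous (fun x : EuclideanSpace ℝ (Fin (n + 1)) =>
      max 0 (min 1 (2 - ‖x - x₀‖ / R))) := by fun_prop
  have hfcont : Continuous (fun x : EuclideanSpace ℝ (Fin (n + 1)) =>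
      Real.exp (-‖x - x₀‖ ^ 2 / (4 * t₀))) := by fun_prop
  have hsupp : HasCompactSupport (fun x : EuclideanSpace ℝ (Fin (n + 1)) =>
      (max 0 (min 1 (2 - ‖x - x₀‖ / R))) * Real.exp (-‖x - x₀‖ ^ 2 / (4 * t₀))) := by
    apply HasCompactSupport.intro (isCompact_closedBall x₀ (2 * R))
    intro x hx
    have hx' : 2 * R < ‖x - x₀‖ := by
      simpa [Metric.mem_closedBall, dist_eq_norm] using hx
    have h1 : 2 - ‖x - x₀‖ / R ≤ 0 := by
      rw [sub_nonpos, le_div_iff₀ hR]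
      linarith
    have hφ0 : max 0 (min 1 (2 - ‖x - x₀‖ / R)) = (0:ℝ) :=
      max_eq_left (le_trans (min_le_right _ _) h1)
    rw [hφ0, zero_mul]
  have hhi : Integrable (fun x : EuclideanSpace ℝ (Fin (n + 1)) =>
      (max 0 (min 1 (2 - ‖x - x₀‖ / R))) * Real.exp (-‖x - x₀‖ ^ 2 / (4 * t₀))) ν :=
    (hφcont.mul hfcont).integrable_of_hasCompactSupport hsupp
  -- integral estimates
  have hsub : (∫ x, Real.exp (-‖x - x₀‖ ^ 2 / (4 * t₀)) ∂ν) -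
      (∫ x, (max 0 (min 1 (2 - ‖x - x₀‖ / R))) * Real.exp (-‖x - x₀‖ ^ 2 / (4 * t₀)) ∂ν) =
      ∫ x, (Real.exp (-‖x - x₀‖ ^ 2 / (4 * t₀)) -
        (max 0 (min 1 (2 - ‖x - x₀‖ / R))) * Real.exp (-‖x - x₀‖ ^ 2 / (4 * t₀))) ∂ν :=
    (integral_sub hfi hhi).symm
  have hnn : 0 ≤ ∫ x, (Real.exp (-‖x - x₀‖ ^ 2 / (4 * t₀)) -
      (max 0 (min 1 (2 - ‖x - x₀‖ / R))) * Real.exp (-‖x - x₀‖ ^ 2 / (4 * t₀))) ∂ν :=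
    integral_nonneg hpt0
  have hub : ∫ x, (Real.exp (-‖x - x₀‖ ^ 2 / (4 * t₀)) -
      (max 0 (min 1 (2 - ‖x - x₀‖ / R))) * Real.exp (-‖x - x₀‖ ^ 2 / (4 * t₀))) ∂ν ≤
      Real.exp (-R ^ 2 / (4 * (2 * t₀))) * ∫ x, Real.exp (-‖x - x₀‖ ^ 2 / (4 * (2 * t₀))) ∂ν := by
    calc _ ≤ ∫ x, Real.exp (-R ^ 2 / (4 * (2 * t₀))) *
            Real.exp (-‖x - x₀‖ ^ 2 / (4 * (2 * t₀))) ∂ν :=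
          integral_mono (hfi.sub hhi) (hgi.const_mul _) hpt
      _ = _ := integral_const_mul _ _
  have hgle : ∫ x, Real.exp (-‖x - x₀‖ ^ 2 / (4 * (2 * t₀))) ∂ν ≤
      max Λ 0 / (4 * Real.pi * (2 * t₀)) ^ (-(n : ℝ) / 2) :=
    aux_int_le n ν Λ hν x₀ (2 * t₀) (by linarith)
  rw [hsub, abs_of_nonneg hnn]
  exact hub.trans (mul_le_mul_of_nonneg_left hgle (Real.exp_pos _).le)

theorem stmt_8 (n : ℕ) (hn : 1 ≤ n)
    (μs : ℕ → Measure (EuclideanSpace ℝ (Fin (n + 1))))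
    (μ : Measure (EuclideanSpace ℝ (Fin (n + 1))))
    [∀ i, IsLocallyFiniteMeasure (μs i)] [IsLocallyFiniteMeasure μ]
    (Λ : ℝ)
    (hΛi : ∀ i, entropyE n (μs i) ≤ ENNReal.ofReal Λ)
    (hΛ : entropyE n μ ≤ ENNReal.ofReal Λ)
    (hconv : ∀ g : EuclideanSpace ℝ (Fin (n + 1)) → ℝ, Continuous g → HasCompactSupport g →
      Tendsto (fun i => ∫ x, g x ∂(μs i)) atTop (nhds (∫ x, g x ∂μ)))
    (x₀ : EuclideanSpace ℝ (Fin (n + 1))) (t₀ : ℝ) (ht₀ : 0 < t₀) :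
    Tendsto (fun i => Ffn n (μs i) x₀ t₀) atTop (nhds (Ffn n μ x₀ t₀)) := by
  have key : Tendsto (fun i => ∫ x, Real.exp (-‖x - x₀‖ ^ 2 / (4 * t₀)) ∂(μs i)) atTop
      (nhds (∫ x, Real.exp (-‖x - x₀‖ ^ 2 / (4 * t₀)) ∂μ)) := by
    rw [Metric.tendsto_atTop]
    intro ε hε
    -- choose R
    have hexp0 : Tendsto (fun R : ℝ => Real.exp (-R ^ 2 / (4 * (2 * t₀))) *
        (max Λ 0 / (4 * Real.pi * (2 * t₀)) ^ (-(n : ℝ) / 2))) atTop (nhds 0) := by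
      have h0 : Tendsto (fun R : ℝ => R ^ 2 / (4 * (2 * t₀))) atTop atTop :=
        (tendsto_pow_atTop two_ne_zero).atTop_div_const (by positivity)
      have h1 : Tendsto (fun R : ℝ => -(R ^ 2 / (4 * (2 * t₀)))) atTop atBot :=
        tendsto_neg_atTop_atBot.comp h0
      have h2 : Tendsto (fun R : ℝ => Real.exp (-(R ^ 2 / (4 * (2 * t₀))))) atTop (nhds 0) :=
        Real.tendsto_exp_atBot.comp h1
      have h3 := h2.mul_const (max Λ 0 / (4 * Real.pi * (2 * t₀)) ^ (-(n : ℝ) / 2))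
      simpa [neg_div] using h3
    have hev := (hexp0.eventually (gt_mem_nhds (show (0:ℝ) < ε / 3 by positivity))).and
      (eventually_gt_atTop (0:ℝ))
    obtain ⟨R, hRδ, hR⟩ := hev.exists
    -- the cutoff function
    have hφcont : Continuous (fun x : EuclideanSpace ℝ (Fin (n + 1)) =>
        (max 0 (min 1 (2 - ‖x - x₀‖ / R))) * Real.exp (-‖x - x₀‖ ^ 2 / (4 * t₀))) := by
      fun_prop
    have hsupp : HasCompactSupport (fun x : EuclideanSpace ℝ (Fin (n + 1)) =>
        (max 0 (min 1 (2 - ‖x - x₀‖ / R))) * Real.exp (-‖x - x₀‖ ^ 2 / (4 * t₀))) := by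
      apply HasCompactSupport.intro (isCompact_closedBall x₀ (2 * R))
      intro x hx
      have hx' : 2 * R < ‖x - x₀‖ := by
        simpa [Metric.mem_closedBall, dist_eq_norm] using hx
      have h1 : 2 - ‖x - x₀‖ / R ≤ 0 := by
        rw [sub_nonpos, le_div_iff₀ hR]
        linarith
      have hφ0 : max 0 (min 1 (2 - ‖x - x₀‖ / R)) = (0:ℝ) :=
        max_eq_left (le_trans (min_le_right _ _) h1)
      rw [hφ0, zero_mul]
    have hconv' := hconv _ hφcont hsupp
    rw [Metric.tendsto_atTop] at hconv'
    obtain ⟨N, hN⟩ := hconv' (ε / 3) (by positivity)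
    refine ⟨N, fun i hi => ?_⟩
    have t1 := aux_tail n (μs i) Λ (hΛi i) x₀ t₀ ht₀ R hR
    have t2 := aux_tail n μ Λ hΛ x₀ t₀ ht₀ R hR
    have t3 := hN i hi
    rw [Real.dist_eq] at t3 ⊢
    have tri : |(∫ x, Real.exp (-‖x - x₀‖ ^ 2 / (4 * t₀)) ∂(μs i)) -
        ∫ x, Real.exp (-‖x - x₀‖ ^ 2 / (4 * t₀)) ∂μ| ≤
        |(∫ x, Real.exp (-‖x - x₀‖ ^ 2 / (4 * t₀)) ∂(μs i)) -
          ∫ x, (max 0 (min 1 (2 - ‖x - x₀‖ / R))) * Real.exp (-‖x - x₀‖ ^ 2 / (4 * t₀)) ∂(μs i)| +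
        |(∫ x, (max 0 (min 1 (2 - ‖x - x₀‖ / R))) * Real.exp (-‖x - x₀‖ ^ 2 / (4 * t₀)) ∂(μs i)) -
          ∫ x, (max 0 (min 1 (2 - ‖x - x₀‖ / R))) * Real.exp (-‖x - x₀‖ ^ 2 / (4 * t₀)) ∂μ| +
        |(∫ x, (max 0 (min 1 (2 - ‖x - x₀‖ / R))) * Real.exp (-‖x - x₀‖ ^ 2 / (4 * t₀)) ∂μ) -
          ∫ x, Real.exp (-‖x - x₀‖ ^ 2 / (4 * t₀)) ∂μ| := by
      apply (abs_sub_le _ _ _).trans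
      gcongr
      exact abs_sub_le _ _ _
    rw [abs_sub_comm (∫ x, (max 0 (min 1 (2 - ‖x - x₀‖ / R))) *
      Real.exp (-‖x - x₀‖ ^ 2 / (4 * t₀)) ∂μ)] at tri
    linarith
  have := key.const_mul ((4 * Real.pi * t₀) ^ (-(n : ℝ) / 2))
  simpa [Ffn] using this
end

section
/- Let n ≥ 1, R > 0, and let I be a nonempty compact subset of (0, ∞). Let μ_i (i ∈ ℕ) and μ be finite Borel measures on ℝ^{n+1} all supported in the closed ball of radius R centered at the origin. If μ_i converges weakly to μ, then the local entropies converge: λ^I(μ_i) → λ^I(μ) as i → ∞. -/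
/-!
Centres `x₀` with `‖x₀‖ ≥ 2R` are dominated by the centre `0`, so for measures supported in
`closedBall 0 R` the local entropy is the supremum of `F` over the compact parameter space
`closedBall 0 (2R) × I`. On that space the heat kernels form a jointly continuous family, so with
bounded masses the functions `(x₀, t₀) ↦ F_{x₀,t₀}(μ_i)` are equicontinuous. Weak convergence,
upgraded to all continuous test functions by a cutoff equal to `1` on the common support, gives
pointwise convergence; Arzelà–Ascoli makes it uniform, and suprema of uniformly convergent
functions converge.
-/

open MeasureTheory Metric Set Filter

/-- The local entropy `λ^I(μ) = sup {F_{x₀,t₀}(μ) : x₀ ∈ ℝ^{n+1}, t₀ ∈ I}`. -/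
noncomputable def localEntropyR (n : ℕ) (I : Set ℝ)
    (μ : Measure (EuclideanSpace ℝ (Fin (n + 1)))) : ℝ :=
  ⨆ (x₀ : EuclideanSpace ℝ (Fin (n + 1))) (t₀ : I), Ffn n μ x₀ (t₀ : ℝ)

open Topology

section SupportedMeasures

variable {X : Type*} [MeasurableSpace X] {S : Set X}

theorem integral_congr_of_measure_compl_eq_zero {ν : Measure X} (hν : ν Sᶜ = 0)
    {f g : X → ℝ} (hfg : EqOn f g S) : ∫ x, f x ∂ν = ∫ x, g x ∂ν :=
  integral_congr_ae (Eventually.mono (mem_ae_iff.2 hν) hfg)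

variable [TopologicalSpace X]

theorem Continuous.integrable_of_measure_compl_eq_zero [T2Space X] [OpensMeasurableSpace X]
    {ν : Measure X} [IsFiniteMeasure ν] {f : X → ℝ} (hf : Continuous f) (hS : IsCompact S)
    (hν : ν Sᶜ = 0) : Integrable f ν := by
  rw [← Measure.restrict_eq_self_of_ae_mem (mem_ae_iff.2 hν)]
  exact hf.continuousOn.integrableOn_compact hS

theorem tendsto_integral_of_measure_compl_eq_zero [T2Space X] [LocallyCompactSpace X]
    {ι : Type*} {l : Filter ι} {μs : ι → Measure X} {μ : Measure X} (hS : IsCompact S)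
    (hμs : ∀ i, μs i Sᶜ = 0) (hμ : μ Sᶜ = 0)
    (hconv : ∀ g : X → ℝ, Continuous g → HasCompactSupport g →
      Tendsto (fun i => ∫ x, g x ∂(μs i)) l (𝓝 (∫ x, g x ∂μ)))
    {f : X → ℝ} (hf : Continuous f) :
    Tendsto (fun i => ∫ x, f x ∂(μs i)) l (𝓝 (∫ x, f x ∂μ)) := by
  obtain ⟨χ, hχS, -, hχ, -⟩ :=
    exists_continuous_one_zero_of_isCompact hS isClosed_empty (disjoint_empty S)
  have hfχ : EqOn (fun x => f x * χ x) f S := fun x hx => by simp [hχS hx]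
  have := hconv (fun x => f x * χ x) (hf.mul χ.continuous) hχ.mul_left
  rw [integral_congr_of_measure_compl_eq_zero hμ hfχ] at this
  exact this.congr fun i => integral_congr_of_measure_compl_eq_zero (hμs i) hfχ

theorem equicontinuous_integral_of_measure_compl_eq_zero [T2Space X] [OpensMeasurableSpace X]
    {ι P : Type*} [TopologicalSpace P] {ν : ι → Measure X} [∀ i, IsFiniteMeasure (ν i)]
    {Φ : P → X → ℝ} (hΦ : Continuous ↿Φ) (hS : IsCompact S) (hν : ∀ i, ν i Sᶜ = 0)
    {M : ℝ} (hM : ∀ i, (ν i).real univ ≤ M) :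
    Equicontinuous fun i p => ∫ x, Φ p x ∂(ν i) := by
  intro p₀
  rw [Metric.equicontinuousAt_iff_right]
  intro ε hε
  set δ := ε / (|M| + 1)
  have hδ : 0 < δ := by positivity
  obtain ⟨V, hV, hΦV⟩ := hS.mem_uniformity_of_prod hΦ.continuousOn (mem_univ p₀)
    (dist_mem_uniformity hδ)
  rw [nhdsWithin_univ] at hV
  filter_upwards [hV] with p hp i
  have hclose : ∀ᵐ x ∂(ν i), ‖Φ p₀ x - Φ p x‖ ≤ δ :=
    Eventually.mono (mem_ae_iff.2 (hν i)) fun x hx => by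
      rw [← dist_eq_norm, dist_comm]; exact (hΦV p hp x hx).le
  have hint (q : P) : Integrable (Φ q) (ν i) :=
    (hΦ.comp (Continuous.prodMk_right q)).integrable_of_measure_compl_eq_zero hS (hν i)
  calc dist (∫ x, Φ p₀ x ∂(ν i)) (∫ x, Φ p x ∂(ν i))
      = ‖∫ x, (Φ p₀ x - Φ p x) ∂(ν i)‖ := by
        rw [dist_eq_norm, integral_sub (hint p₀) (hint p)]
    _ ≤ δ * (ν i).real univ := norm_integral_le_of_norm_le_const hclose
    _ ≤ δ * |M| := by gcongr; exact (hM i).trans (le_abs_self M)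
    _ < ε := by
        rw [div_mul_eq_mul_div, div_lt_iff₀ (by positivity)]
        linarith

theorem continuous_integral_of_measure_compl_eq_zero [T2Space X] [OpensMeasurableSpace X]
    {P : Type*} [TopologicalSpace P] {ν : Measure X} [IsFiniteMeasure ν]
    {Φ : P → X → ℝ} (hΦ : Continuous ↿Φ) (hS : IsCompact S) (hν : ν Sᶜ = 0) :
    Continuous fun p => ∫ x, Φ p x ∂ν :=
  (equicontinuous_integral_of_measure_compl_eq_zero (ν := fun _ : Unit => ν) hΦ hS
    (fun _ => hν) (fun _ => le_rfl)).continuous ()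

theorem tendstoUniformly_integral_of_measure_compl_eq_zero [T2Space X] [LocallyCompactSpace X]
    [OpensMeasurableSpace X] {P : Type*} [TopologicalSpace P] [CompactSpace P]
    {μs : ℕ → Measure X} {μ : Measure X} [∀ i, IsFiniteMeasure (μs i)]
    {Φ : P → X → ℝ} (hΦ : Continuous ↿Φ) (hS : IsCompact S)
    (hμs : ∀ i, μs i Sᶜ = 0) (hμ : μ Sᶜ = 0)
    (hconv : ∀ g : X → ℝ, Continuous g → HasCompactSupport g →
      Tendsto (fun i => ∫ x, g x ∂(μs i)) atTop (𝓝 (∫ x, g x ∂μ))) :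
    TendstoUniformly (fun i p => ∫ x, Φ p x ∂(μs i)) (fun p => ∫ x, Φ p x ∂μ) atTop := by
  have hmass : Tendsto (fun i => (μs i).real univ) atTop (𝓝 (μ.real univ)) := by
    simpa using tendsto_integral_of_measure_compl_eq_zero hS hμs hμ hconv continuous_const
      (f := fun _ => (1 : ℝ))
  obtain ⟨M, hM⟩ := hmass.bddAbove_range
  have heq := equicontinuous_integral_of_measure_compl_eq_zero hΦ hS hμs
    (fun i => hM (mem_range_self i))
  refine UniformFun.tendsto_iff_tendstoUniformly.1 ((heq.tendsto_uniformFun_iff_pi _ _).2 ?_)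
  exact tendsto_pi_nhds.2 fun p => tendsto_integral_of_measure_compl_eq_zero hS hμs hμ hconv
    (hΦ.comp (Continuous.prodMk_right p))

end SupportedMeasures

theorem tendsto_ciSup_of_tendstoUniformly {ι α : Type*} [Nonempty α] {l : Filter ι}
    {F : ι → α → ℝ} {f : α → ℝ} (h : TendstoUniformly F f l) (hf : BddAbove (range f)) :
    Tendsto (fun i => ⨆ a, F i a) l (𝓝 (⨆ a, f a)) := by
  rw [Metric.tendsto_nhds]
  intro ε hε
  filter_upwards [Metric.tendstoUniformly_iff.1 h (ε / 2) (half_pos hε)] with i hi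
  have hclose (a : α) := abs_lt.1 (Real.dist_eq _ _ ▸ hi a)
  have hFbdd : BddAbove (range (F i)) :=
    ⟨(⨆ a, f a) + ε / 2, forall_mem_range.2 fun a => by
      linarith [(hclose a).1, le_ciSup hf a]⟩
  have hup : ⨆ a, F i a ≤ (⨆ a, f a) + ε / 2 :=
    ciSup_le fun a => by linarith [(hclose a).1, le_ciSup hf a]
  have hlow : ⨆ a, f a ≤ (⨆ a, F i a) + ε / 2 :=
    ciSup_le fun a => by linarith [(hclose a).2, le_ciSup hFbdd a]
  rw [Real.dist_eq, abs_lt]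
  constructor <;> linarith

theorem ciSup_ciSup_eq_ciSup_prod_of_le {α β γ : Type*} [Nonempty β]
    [ConditionallyCompleteLattice γ] {f : α → β → γ} {s : Set α} [Nonempty s]
    (hbdd : BddAbove (range fun p : s × β => f p.1 p.2)) (hdom : ∀ a b, ∃ c ∈ s, f a b ≤ f c b) :
    ⨆ a, ⨆ b, f a b = ⨆ p : s × β, f p.1 p.2 := by
  have : Nonempty α := Nonempty.map Subtype.val ‹_›
  have hle (a : α) (b : β) : f a b ≤ ⨆ p : s × β, f p.1 p.2 := by
    obtain ⟨c, hc, hac⟩ := hdom a b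
    exact hac.trans (le_ciSup hbdd (⟨c, hc⟩, b))
  refine le_antisymm (ciSup_le fun a => ciSup_le (hle a)) (ciSup_le fun p => ?_)
  refine le_ciSup_of_le ⟨_, forall_mem_range.2 fun a => ciSup_le (hle a)⟩ p.1 ?_
  exact le_ciSup ⟨_, forall_mem_range.2 (hle p.1)⟩ p.2

section HeatKernel

variable {E : Type*} [NormedAddCommGroup E]

noncomputable def heatKernel (n : ℕ) (x₀ : E) (t : ℝ) (x : E) : ℝ :=
  (4 * Real.pi * t) ^ (-(n : ℝ) / 2) * Real.exp (-‖x - x₀‖ ^ 2 / (4 * t))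

theorem Continuous.heatKernel {Y : Type*} [TopologicalSpace Y] (n : ℕ) {x₀ : Y → E}
    {t : Y → ℝ} {x : Y → E} (hx₀ : Continuous x₀) (ht : Continuous t) (hx : Continuous x)
    (hpos : ∀ y, 0 < t y) : Continuous fun y => heatKernel n (x₀ y) (t y) (x y) := by
  have h4t : Continuous fun y => 4 * Real.pi * t y := continuous_const.mul ht
  have h4t_pos (y : Y) : 0 < 4 * Real.pi * t y := by have := hpos y; positivity
  exact (h4t.rpow_const fun y => Or.inl (h4t_pos y).ne').mul <| Real.continuous_exp.comp <|
    ((hx.sub hx₀).norm.pow 2).neg.div (continuous_const.mul ht)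
      fun y => by have := hpos y; positivity

theorem continuous_heatKernel_of_subset_Ioi (n : ℕ) {K : Set E} {I : Set ℝ} (hI : I ⊆ Ioi 0) :
    Continuous fun q : (K × I) × E => heatKernel n (q.1.1 : E) q.1.2 q.2 :=
  .heatKernel n (by fun_prop) (by fun_prop) continuous_snd fun q => hI q.1.2.2

theorem heatKernel_le_heatKernel_zero {n : ℕ} {x₀ x : E} {t R : ℝ} (ht : 0 < t)
    (hx : ‖x‖ ≤ R) (hx₀ : 2 * R ≤ ‖x₀‖) : heatKernel n x₀ t x ≤ heatKernel n 0 t x := by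
  have hdist : ‖x‖ ≤ ‖x - x₀‖ := by
    have := norm_sub_norm_le x₀ x
    rw [norm_sub_rev] at this
    linarith
  unfold heatKernel
  gcongr
  simpa using hdist

end HeatKernel

theorem Ffn_eq_integral_heatKernel {n : ℕ} (ν : Measure (EuclideanSpace ℝ (Fin (n + 1))))
    (x₀ : EuclideanSpace ℝ (Fin (n + 1))) (t : ℝ) :
    Ffn n ν x₀ t = ∫ x, heatKernel n x₀ t x ∂ν :=
  (integral_const_mul _ _).symm

theorem Ffn_le_Ffn_zero {n : ℕ} {ν : Measure (EuclideanSpace ℝ (Fin (n + 1)))}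
    [IsFiniteMeasure ν] {x₀ : EuclideanSpace ℝ (Fin (n + 1))} {t R : ℝ} (ht : 0 < t)
    (hx₀ : 2 * R ≤ ‖x₀‖) (hν : ν (closedBall 0 R)ᶜ = 0) : Ffn n ν x₀ t ≤ Ffn n ν 0 t := by
  have hint (y : EuclideanSpace ℝ (Fin (n + 1))) : Integrable (heatKernel n y t) ν :=
    (Continuous.heatKernel n continuous_const continuous_const continuous_id fun _ => ht)
      |>.integrable_of_measure_compl_eq_zero (isCompact_closedBall 0 R) hν
  simp only [Ffn_eq_integral_heatKernel]
  exact integral_mono_ae (hint x₀) (hint 0) <| Eventually.mono (mem_ae_iff.2 hν) fun x hx =>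
    heatKernel_le_heatKernel_zero ht (mem_closedBall_zero_iff.1 hx) hx₀

theorem localEntropyR_eq_ciSup_closedBall {n : ℕ} {I : Set ℝ} [Nonempty I] [CompactSpace I]
    (hI : I ⊆ Ioi 0) {R : ℝ} (hR : 0 ≤ R) {ν : Measure (EuclideanSpace ℝ (Fin (n + 1)))}
    [IsFiniteMeasure ν] (hν : ν (closedBall 0 R)ᶜ = 0) :
    localEntropyR n I ν = ⨆ p : closedBall (0 : EuclideanSpace ℝ (Fin (n + 1))) (2 * R) × I,
      Ffn n ν p.1 p.2 := by
  have : Nonempty (closedBall (0 : EuclideanSpace ℝ (Fin (n + 1))) (2 * R)) :=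
    ⟨⟨0, mem_closedBall_self (by positivity)⟩⟩
  have hcont : Continuous fun p : closedBall (0 : EuclideanSpace ℝ (Fin (n + 1))) (2 * R) × I =>
      Ffn n ν p.1 p.2 := by
    simp only [Ffn_eq_integral_heatKernel]
    exact continuous_integral_of_measure_compl_eq_zero (continuous_heatKernel_of_subset_Ioi n hI)
      (isCompact_closedBall 0 R) hν
  refine ciSup_ciSup_eq_ciSup_prod_of_le (isCompact_range hcont).bddAbove fun x₀ t => ?_
  by_cases hx₀ : ‖x₀‖ ≤ 2 * R
  · exact ⟨x₀, mem_closedBall_zero_iff.2 hx₀, le_rfl⟩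
  · exact ⟨0, mem_closedBall_self (by positivity), Ffn_le_Ffn_zero (hI t.2) (not_le.1 hx₀).le hν⟩

theorem stmt_11_general (n : ℕ) (R : ℝ) (hR : 0 < R)
    (I : Set ℝ) (hne : I.Nonempty) (hcpt : IsCompact I) (hIpos : I ⊆ Ioi (0 : ℝ))
    (μs : ℕ → Measure (EuclideanSpace ℝ (Fin (n + 1))))
    (μ : Measure (EuclideanSpace ℝ (Fin (n + 1))))
    [∀ i, IsFiniteMeasure (μs i)] [IsFiniteMeasure μ]
    (hsupp_i : ∀ i, μs i (closedBall (0 : EuclideanSpace ℝ (Fin (n + 1))) R)ᶜ = 0)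
    (hsupp : μ (closedBall (0 : EuclideanSpace ℝ (Fin (n + 1))) R)ᶜ = 0)
    (hconv : ∀ g : EuclideanSpace ℝ (Fin (n + 1)) → ℝ, Continuous g → HasCompactSupport g →
      Tendsto (fun i => ∫ x, g x ∂(μs i)) atTop (nhds (∫ x, g x ∂μ))) :
    Tendsto (fun i => localEntropyR n I (μs i)) atTop (nhds (localEntropyR n I μ)) := by
  have : Nonempty I := hne.to_subtype
  have : CompactSpace I := isCompact_iff_compactSpace.1 hcpt
  have : Nonempty (closedBall (0 : EuclideanSpace ℝ (Fin (n + 1))) (2 * R)) :=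
    ⟨⟨0, mem_closedBall_self (by positivity)⟩⟩
  have hΦ := continuous_heatKernel_of_subset_Ioi n
    (K := closedBall (0 : EuclideanSpace ℝ (Fin (n + 1))) (2 * R)) hIpos
  simp only [localEntropyR_eq_ciSup_closedBall hIpos hR.le hsupp,
    localEntropyR_eq_ciSup_closedBall hIpos hR.le (hsupp_i _), Ffn_eq_integral_heatKernel]
  exact tendsto_ciSup_of_tendstoUniformly
    (tendstoUniformly_integral_of_measure_compl_eq_zero hΦ (isCompact_closedBall 0 R)
      hsupp_i hsupp hconv)
    (isCompact_range (continuous_integral_of_measure_compl_eq_zero hΦ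
      (isCompact_closedBall 0 R) hsupp)).bddAbove

theorem stmt_11 (n : ℕ) (hn : 1 ≤ n) (R : ℝ) (hR : 0 < R)
    (I : Set ℝ) (hne : I.Nonempty) (hcpt : IsCompact I) (hIpos : I ⊆ Ioi (0 : ℝ))
    (μs : ℕ → Measure (EuclideanSpace ℝ (Fin (n + 1))))
    (μ : Measure (EuclideanSpace ℝ (Fin (n + 1))))
    [∀ i, IsFiniteMeasure (μs i)] [IsFiniteMeasure μ]
    (hsupp_i : ∀ i, μs i (closedBall (0 : EuclideanSpace ℝ (Fin (n + 1))) R)ᶜ = 0)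
    (hsupp : μ (closedBall (0 : EuclideanSpace ℝ (Fin (n + 1))) R)ᶜ = 0)
    (hconv : ∀ g : EuclideanSpace ℝ (Fin (n + 1)) → ℝ, Continuous g → HasCompactSupport g →
      Tendsto (fun i => ∫ x, g x ∂(μs i)) atTop (nhds (∫ x, g x ∂μ))) :
    Tendsto (fun i => localEntropyR n I (μs i)) atTop (nhds (localEntropyR n I μ)) :=
  stmt_11_general n R hR I hne hcpt hIpos μs μ hsupp_i hsupp hconv
end
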